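/- Let α > 1 and let T be an absolutely (C,α)-Cesàro bounded operator on a complex Banach space X. Then ‖T^n‖ = O(n), i.e. there exists a constant M > 0 such that ‖T^n‖ ≤ M·n for all n ≥ 1. -/

import Mathlib

open Filter
open scoped ENNReal

/-- The Cesàro kernel of order `α`: `k^α(n) = Γ(α+n) / (Γ(α)·Γ(n+1))`. -/
noncomputable def cesKernel (α : ℝ) (n : ℕ) : ℝ :=
  Real.Gamma (α + n) / (Real.Gamma α * Real.Gamma (n + 1))

/-- A bounded linear operator `T` on a complex Banach space is absolutely `(C,α)`-Cesàro
bounded if there is `C > 0` with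
`(1/k^{α+1}(n)) · Σ_{j=0}^n k^α(n-j) ‖T^j x‖ ≤ C ‖x‖` for all `n` and `x`. -/
def AbsCesaroBounded {X : Type*} [NormedAddCommGroup X] [NormedSpace ℂ X]
    (α : ℝ) (T : X →L[ℂ] X) : Prop :=
  ∃ C : ℝ, 0 < C ∧ ∀ (n : ℕ) (x : X),
    (cesKernel (α + 1) n)⁻¹ *
      ∑ j ∈ Finset.range (n + 1), cesKernel α (n - j) * ‖(T ^ j) x‖ ≤ C * ‖x‖

lemma cesKernel_pos (α : ℝ) (hα : 0 < α) (n : ℕ) : 0 < cesKernel α n := by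
  unfold cesKernel
  have h1 : 0 < Real.Gamma (α + n) := Real.Gamma_pos_of_pos (by positivity)
  have h2 : 0 < Real.Gamma α := Real.Gamma_pos_of_pos hα
  have h3 : 0 < Real.Gamma ((n : ℝ) + 1) := Real.Gamma_pos_of_pos (by positivity)
  positivity

lemma cesKernel_succ (α : ℝ) (hα : 0 < α) (n : ℕ) :
    cesKernel α (n + 1) = cesKernel α n * ((α + n) / (n + 1)) := by
  have h1 : α + (n : ℝ) ≠ 0 := by positivity
  have h2 : ((n : ℝ) + 1) ≠ 0 := by positivity
  have hΓα : Real.Gamma α ≠ 0 := (Real.Gamma_pos_of_pos hα).ne'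
  have hΓn : Real.Gamma ((n : ℝ) + 1) ≠ 0 := (Real.Gamma_pos_of_pos (by positivity)).ne'
  unfold cesKernel
  push_cast
  rw [show α + ((n : ℝ) + 1) = (α + n) + 1 by ring, Real.Gamma_add_one h1,
    Real.Gamma_add_one h2]
  field_simp

lemma cesKernel_shift (α : ℝ) (hα : 0 < α) (n : ℕ) :
    cesKernel (α + 1) n = cesKernel α n * ((α + n) / α) := by
  have h1 : α + (n : ℝ) ≠ 0 := by positivity
  have hΓα : Real.Gamma α ≠ 0 := (Real.Gamma_pos_of_pos hα).ne'
  have hΓn : Real.Gamma ((n : ℝ) + 1) ≠ 0 := (Real.Gamma_pos_of_pos (by positivity)).ne'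
  unfold cesKernel
  rw [show α + 1 + (n : ℝ) = (α + n) + 1 by ring, Real.Gamma_add_one h1,
    Real.Gamma_add_one hα.ne']
  field_simp

lemma cesKernel_growth (α : ℝ) (hα : 1 < α) (n d : ℕ) :
    cesKernel α (n + d) ≤ cesKernel α n * (1 + (α - 1) / (n + 1)) ^ d := by
  have hα0 : 0 < α := lt_trans one_pos hα
  induction d with
  | zero => simp
  | succ d ih =>
    have hrec := cesKernel_succ α hα0 (n + d)
    have hcast : ((n + d : ℕ) : ℝ) = (n : ℝ) + d := by push_cast; ring
    have hfac : (α + ((n : ℝ) + d)) / ((n : ℝ) + d + 1) = 1 + (α - 1) / ((n : ℝ) + d + 1) := by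
      field_simp
      ring
    have hfacle : 1 + (α - 1) / ((n : ℝ) + d + 1) ≤ 1 + (α - 1) / ((n : ℝ) + 1) := by
      have : (α - 1) / ((n : ℝ) + d + 1) ≤ (α - 1) / ((n : ℝ) + 1) := by
        apply div_le_div_of_nonneg_left (by linarith) (by positivity) (by push_cast; linarith [Nat.cast_nonneg (α := ℝ) d])
      linarith
    have hfacpos : 0 < 1 + (α - 1) / ((n : ℝ) + d + 1) := by
      have : (0:ℝ) ≤ (α - 1) / ((n : ℝ) + d + 1) := div_nonneg (by linarith) (by positivity)
      linarith
    have hKpos : 0 < cesKernel α (n + d) := cesKernel_pos α hα0 _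
    calc cesKernel α (n + (d + 1)) = cesKernel α (n + d) * (1 + (α - 1) / ((n : ℝ) + d + 1)) := by
          rw [show n + (d + 1) = (n + d) + 1 by ring, hrec, hcast, hfac]
      _ ≤ cesKernel α (n + d) * (1 + (α - 1) / ((n : ℝ) + 1)) :=
          mul_le_mul_of_nonneg_left hfacle hKpos.le
      _ ≤ (cesKernel α n * (1 + (α - 1) / (n + 1)) ^ d) * (1 + (α - 1) / ((n : ℝ) + 1)) := by
          apply mul_le_mul_of_nonneg_right ih (le_of_lt (by
            have : (0:ℝ) ≤ (α - 1) / ((n : ℝ) + 1) := div_nonneg (by linarith) (by positivity)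
            linarith))
      _ = cesKernel α n * (1 + (α - 1) / (n + 1)) ^ (d + 1) := by ring

lemma pow_le_exp (α : ℝ) (hα : 1 < α) (n : ℕ) :
    (1 + (α - 1) / ((n : ℝ) + 1)) ^ n ≤ Real.exp (α - 1) := by
  have h1 : (1 : ℝ) + (α - 1) / ((n : ℝ) + 1) ≤ Real.exp ((α - 1) / ((n : ℝ) + 1)) := by
    have := Real.add_one_le_exp ((α - 1) / ((n : ℝ) + 1))
    linarith
  have h0 : (0 : ℝ) ≤ 1 + (α - 1) / ((n : ℝ) + 1) := by
    have : (0:ℝ) ≤ (α - 1) / ((n : ℝ) + 1) := div_nonneg (by linarith) (by positivity)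
    linarith
  calc (1 + (α - 1) / ((n : ℝ) + 1)) ^ n ≤ (Real.exp ((α - 1) / ((n : ℝ) + 1))) ^ n :=
        pow_le_pow_left₀ h0 h1 n
    _ = Real.exp ((α - 1) / ((n : ℝ) + 1) * n) := by rw [← Real.exp_nat_mul]; ring_nf
    _ ≤ Real.exp (α - 1) := by
        apply Real.exp_le_exp.2
        rw [div_mul_eq_mul_div, div_le_iff₀ (by positivity)]
        nlinarith [Nat.cast_nonneg (α := ℝ) n, sub_nonneg.2 hα.le]

/-- Let `α > 1` and `T` be absolutely `(C,α)`-Cesàro bounded on a complex Banach space.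
Then `‖T^n‖ = O(n)`. -/
theorem stmt8 {X : Type*} [NormedAddCommGroup X] [NormedSpace ℂ X] [CompleteSpace X]
    (α : ℝ) (hα : 1 < α) (T : X →L[ℂ] X) (hT : AbsCesaroBounded α T) :
    ∃ M : ℝ, 0 < M ∧ ∀ n : ℕ, 1 ≤ n → ‖T ^ n‖ ≤ M * n := by
  obtain ⟨C, hC, hbd⟩ := hT
  have hα0 : 0 < α := lt_trans one_pos hα
  refine ⟨3 * C * Real.exp (α - 1), by positivity, ?_⟩
  intro n hn
  have hn1 : (1 : ℝ) ≤ (n : ℝ) := by exact_mod_cast hn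
  refine ContinuousLinearMap.opNorm_le_bound _ (by positivity) ?_
  intro x
  have hKpos : 0 < cesKernel α n := cesKernel_pos α hα0 n
  have hK1pos : 0 < cesKernel (α + 1) (n + n) := cesKernel_pos (α + 1) (by linarith) _
  -- single term bound
  have hterm : cesKernel α n * ‖(T ^ n) x‖ ≤
      ∑ j ∈ Finset.range (n + n + 1), cesKernel α (n + n - j) * ‖(T ^ j) x‖ := by
    have := Finset.single_le_sum (f := fun j => cesKernel α (n + n - j) * ‖(T ^ j) x‖)
      (fun j _ => mul_nonneg (cesKernel_pos α hα0 _).le (norm_nonneg _))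
      (Finset.mem_range.2 (show n < n + n + 1 by omega))
    simpa [Nat.add_sub_cancel] using this
  have hsum := hbd (n + n) x
  have hsum' : ∑ j ∈ Finset.range (n + n + 1), cesKernel α (n + n - j) * ‖(T ^ j) x‖
      ≤ cesKernel (α + 1) (n + n) * (C * ‖x‖) := by
    rw [inv_mul_le_iff₀ hK1pos] at hsum
    linarith [hsum]
  -- kernel comparison
  have hshift := cesKernel_shift α hα0 (n + n)
  have hgrow := cesKernel_growth α hα n n
  have hpow := pow_le_exp α hα n
  have hcast : ((n + n : ℕ) : ℝ) = 2 * (n : ℝ) := by push_cast; ring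
  have hratio : 0 ≤ (α + 2 * (n : ℝ)) / α := by positivity
  have hKgrow : cesKernel α (n + n) ≤ cesKernel α n * Real.exp (α - 1) := by
    calc cesKernel α (n + n) ≤ cesKernel α n * (1 + (α - 1) / (n + 1)) ^ n := hgrow
      _ ≤ cesKernel α n * Real.exp (α - 1) := mul_le_mul_of_nonneg_left hpow hKpos.le
  have hK1le : cesKernel (α + 1) (n + n) ≤
      cesKernel α n * Real.exp (α - 1) * ((α + 2 * (n : ℝ)) / α) := by
    rw [hshift, hcast]
    exact mul_le_mul_of_nonneg_right hKgrow hratio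
  have hratio3 : (α + 2 * (n : ℝ)) / α ≤ 3 * n := by
    rw [div_le_iff₀ hα0]
    nlinarith
  have hchain : cesKernel α n * ‖(T ^ n) x‖ ≤
      cesKernel α n * (3 * C * Real.exp (α - 1) * n * ‖x‖) := by
    calc cesKernel α n * ‖(T ^ n) x‖
        ≤ cesKernel (α + 1) (n + n) * (C * ‖x‖) := le_trans hterm hsum'
      _ ≤ (cesKernel α n * Real.exp (α - 1) * ((α + 2 * (n : ℝ)) / α)) * (C * ‖x‖) :=
          mul_le_mul_of_nonneg_right hK1le (by positivity)
      _ ≤ (cesKernel α n * Real.exp (α - 1) * (3 * n)) * (C * ‖x‖) := by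
          apply mul_le_mul_of_nonneg_right _ (by positivity)
          apply mul_le_mul_of_nonneg_left hratio3 (by positivity)
      _ = cesKernel α n * (3 * C * Real.exp (α - 1) * n * ‖x‖) := by ring
  have := le_of_mul_le_mul_left hchain hKpos
  linarith
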